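/- arXiv:1008.4002 — 2 statements merged into one kernel-verified Lean document; each statement's English description precedes it below -/
import Mathlib

section
/- Let n, k, m be positive integers and let -1 ≤ λ_1 ≤ λ_2 ≤ … ≤ λ_n ≤ 1 be real numbers. Then there exists a partition of the index set {1,…,n} into a set J and sets L_a for a = -m, -m+1, …, m (pairwise disjoint with union {1,…,n}) such that: (1) #J ≤ n/k; (2) |λ_i - λ_j| < 1/m whenever i and j belong to the same set L_a; (3) |λ_i - λ_j| ≥ 1/(km) whenever i ∈ L_a and j ∈ L_b with a ≠ b. -/
/-!
Round each `λ_i` down to the grid `ℤ / (km)`, getting integers `s_i ∈ [-km, km]`. Among the `k`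
shifts `c ∈ [0, k)`, pigeonhole gives one for which at most `n / k` of the `s_i + c` are
divisible by `k`; these indices form `J`. The others are grouped by `(s_i + c) / k ∈ [-m, m]`.
Within a group the `s_i` differ by at most `k - 2`, so the `λ_i` differ by less than
`(k - 1) / (km) < 1 / m`; between groups a removed multiple of `k` separates the `s_i`, so they
differ by at least `2` and the `λ_i` by more than `1 / (km)`.
-/

open Finset

namespace Int

variable {k x y : ℤ}

theorem sub_le_of_ediv_eq_of_not_dvd (hk : 0 < k) (hy : ¬ k ∣ y)
    (h : x / k = y / k) : x - y ≤ k - 2 := by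
  have hx₂ := emod_lt_of_pos x hk
  have hy₁ := (emod_pos_of_not_dvd hy).resolve_left hk.ne'
  have hx' := mul_ediv_add_emod x k
  rw [h] at hx'
  linarith [mul_ediv_add_emod y k]

theorem add_two_le_of_ediv_lt_of_not_dvd (hk : 0 < k) (hy : ¬ k ∣ y)
    (h : x / k < y / k) : x + 2 ≤ y := by
  have hx₂ := emod_lt_of_pos x hk
  have hy₁ := (emod_pos_of_not_dvd hy).resolve_left hk.ne'
  have hq : k * (x / k + 1) ≤ k * (y / k) := mul_le_mul_of_nonneg_left h hk.le
  linarith [mul_ediv_add_emod x k, mul_ediv_add_emod y k]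

theorem neg_emod_eq_iff_dvd_add {c : ℤ} (hc : c ∈ Finset.Ico 0 k) : -x % k = c ↔ k ∣ x + c := by
  obtain ⟨hc₀, hck⟩ := Finset.mem_Ico.1 hc
  nth_rw 1 [← emod_eq_of_lt hc₀ hck]
  rw [emod_eq_emod_iff_emod_sub_eq_zero, ← dvd_iff_emod_eq_zero,
    show -x - c = -(x + c) by ring, dvd_neg]

end Int

theorem exists_shift_card_filter_dvd_le {ι : Type*} (s : Finset ι) (x : ι → ℤ) {k : ℕ}
    (hk : 0 < k) : ∃ c ∈ Ico (0 : ℤ) k, (#{i ∈ s | (k : ℤ) ∣ x i + c} : ℝ) ≤ #s / k := by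
  obtain ⟨c, hc, hcard⟩ := exists_card_fiber_le_of_card_le_nsmul (s := s) (t := Ico (0 : ℤ) k)
    (f := fun i => -x i % k) (b := (#s / k : ℝ)) ⟨0, by simp [hk]⟩ (by simp [field])
  refine ⟨c, hc, le_of_eq_of_le ?_ hcard⟩
  congr 3 with i
  exact (Int.neg_emod_eq_iff_dvd_add hc).symm

section FloorBlocks

variable {R : Type*} [Field R] [LinearOrder R] [IsStrictOrderedRing R] [FloorRing R]
  {k c : ℤ} {u v : R}

theorem abs_sub_lt_of_floor_add_ediv_eq (hk : 0 < k) (hu : ¬ k ∣ ⌊u⌋ + c) (hv : ¬ k ∣ ⌊v⌋ + c)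
    (h : (⌊u⌋ + c) / k = (⌊v⌋ + c) / k) : |u - v| < k - 1 := by
  have huv : (⌊u⌋ : R) - ⌊v⌋ ≤ k - 2 := by
    exact_mod_cast (by linarith [Int.sub_le_of_ediv_eq_of_not_dvd hk hv h] : ⌊u⌋ - ⌊v⌋ ≤ k - 2)
  have hvu : (⌊v⌋ : R) - ⌊u⌋ ≤ k - 2 := by
    exact_mod_cast (by linarith [Int.sub_le_of_ediv_eq_of_not_dvd hk hu h.symm] : ⌊v⌋ - ⌊u⌋ ≤ k - 2)
  rw [abs_sub_lt_iff]
  constructor <;> linarith [Int.floor_le u, Int.lt_floor_add_one u, Int.floor_le v,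
    Int.lt_floor_add_one v]

theorem one_lt_sub_of_floor_add_ediv_lt (hk : 0 < k)
    (hv : ¬ k ∣ ⌊v⌋ + c) (h : (⌊u⌋ + c) / k < (⌊v⌋ + c) / k) : 1 < v - u := by
  have huv : ((⌊u⌋ + 2 : ℤ) : R) ≤ ⌊v⌋ := by
    exact_mod_cast (by linarith [Int.add_two_le_of_ediv_lt_of_not_dvd hk hv h])
  push_cast at huv
  linarith [Int.lt_floor_add_one u, Int.floor_le v]

theorem one_lt_abs_sub_of_floor_add_ediv_ne (hk : 0 < k) (hu : ¬ k ∣ ⌊u⌋ + c)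
    (hv : ¬ k ∣ ⌊v⌋ + c) (h : (⌊u⌋ + c) / k ≠ (⌊v⌋ + c) / k) : 1 < |u - v| := by
  rcases h.lt_or_gt with h | h
  · exact (one_lt_sub_of_floor_add_ediv_lt hk hv h).trans_le (abs_sub_comm u v ▸ le_abs_self _)
  · exact (one_lt_sub_of_floor_add_ediv_lt hk hu h).trans_le (le_abs_self _)

end FloorBlocks

theorem floor_mul_add_ediv_mem_Icc {R : Type*} [Field R] [LinearOrder R] [IsStrictOrderedRing R]
    [FloorRing R] {u : R} (h₁ : -1 ≤ u) (h₂ : u ≤ 1) {k : ℕ} (hk : 0 < k) (m : ℕ) {c : ℤ}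
    (hc : c ∈ Ico (0 : ℤ) k) : (⌊u * (k * m)⌋ + c) / k ∈ Icc (-(m : ℤ)) m := by
  have hkm : (0 : R) ≤ k * m := by positivity
  have hlo : -(m * k : ℤ) ≤ ⌊u * (k * m)⌋ := Int.le_floor.2 (by push_cast; nlinarith)
  have hhi : ⌊u * (k * m)⌋ ≤ m * k := Int.floor_le_iff.2 (by push_cast; nlinarith)
  have hkZ : (0 : ℤ) < k := by exact_mod_cast hk
  rw [mem_Ico] at hc
  rw [mem_Icc, Int.le_ediv_iff_mul_le hkZ, Int.ediv_le_iff_le_mul hkZ]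
  constructor <;> linarith

section QuotientBlocks

variable {ι : Type*} [Fintype ι] (k : ℤ) (x : ι → ℤ)

def dvdIndices : Finset ι := {i | k ∣ x i}

def quotientBlock (a : ℤ) : Finset ι := {i | ¬ k ∣ x i ∧ x i / k = a}

variable {k x}

theorem mem_dvdIndices {i : ι} : i ∈ dvdIndices k x ↔ k ∣ x i := by simp [dvdIndices]

theorem mem_quotientBlock {i : ι} {a : ℤ} :
    i ∈ quotientBlock k x a ↔ ¬ k ∣ x i ∧ x i / k = a := by
  simp [quotientBlock]

theorem disjoint_quotientBlock {a b : ℤ} (hab : a ≠ b) :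
    Disjoint (quotientBlock k x a) (quotientBlock k x b) := by
  simp only [disjoint_left, mem_quotientBlock]
  rintro i ⟨-, rfl⟩ ⟨-, h⟩
  exact hab h

theorem disjoint_dvdIndices_quotientBlock (a : ℤ) :
    Disjoint (dvdIndices k x) (quotientBlock k x a) := by
  simp only [disjoint_left, mem_dvdIndices, mem_quotientBlock]
  exact fun _ h h' => h'.1 h

theorem quotientBlock_eq_empty {s : Finset ℤ} (hs : ∀ i, x i / k ∈ s) {a : ℤ} (ha : a ∉ s) :
    quotientBlock k x a = ∅ := by
  refine eq_empty_of_forall_notMem fun i hi => ha ?_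
  exact (mem_quotientBlock.1 hi).2 ▸ hs i

theorem dvdIndices_union_biUnion_quotientBlock [DecidableEq ι] {s : Finset ℤ}
    (hs : ∀ i, x i / k ∈ s) :
    dvdIndices k x ∪ s.biUnion (quotientBlock k x) = univ := by
  refine eq_univ_of_forall fun i => ?_
  by_cases h : k ∣ x i
  · exact mem_union_left _ (mem_dvdIndices.2 h)
  · exact mem_union_right _ (mem_biUnion.2 ⟨_, hs i, mem_quotientBlock.2 ⟨h, rfl⟩⟩)

end QuotientBlocks

theorem lemma1_partition_general (n k m : ℕ) (hk : 0 < k) (hm : 0 < m)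
    (lam : Fin n → ℝ)
    (hlow : ∀ i, -1 ≤ lam i) (hhigh : ∀ i, lam i ≤ 1) :
    ∃ (J : Finset (Fin n)) (L : ℤ → Finset (Fin n)),
      -- the sets `L_a` are indexed by `a ∈ {-m, …, m}`
      (∀ a : ℤ, a ∉ Finset.Icc (-(m : ℤ)) (m : ℤ) → L a = ∅) ∧
      -- the sets `L_a` are pairwise disjoint
      (∀ a b : ℤ, a ≠ b → Disjoint (L a) (L b)) ∧
      -- each `L_a` is disjoint from `J`
      (∀ a : ℤ, Disjoint J (L a)) ∧
      -- together they cover `{1,…,n}`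
      (J ∪ (Finset.Icc (-(m : ℤ)) (m : ℤ)).biUnion L = Finset.univ) ∧
      -- Property 1: `#J ≤ n/k`
      ((J.card : ℝ) ≤ (n : ℝ) / (k : ℝ)) ∧
      -- Property 2: small gaps inside each block
      (∀ a : ℤ, ∀ i ∈ L a, ∀ j ∈ L a, |lam i - lam j| < 1 / (m : ℝ)) ∧
      -- Property 3: separation between distinct blocks
      (∀ a b : ℤ, a ≠ b → ∀ i ∈ L a, ∀ j ∈ L b,
        1 / ((k : ℝ) * (m : ℝ)) ≤ |lam i - lam j|) := by
  have hkZ : (0 : ℤ) < k := by exact_mod_cast hk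
  have hK : (0 : ℝ) < k * m := by positivity
  obtain ⟨c, hc, hcard⟩ := exists_shift_card_filter_dvd_le univ (fun i => ⌊lam i * (k * m)⌋) hk
  set x : Fin n → ℤ := fun i => ⌊lam i * (k * m)⌋ + c
  have hrange : ∀ i, x i / k ∈ Icc (-(m : ℤ)) m := fun i =>
    floor_mul_add_ediv_mem_Icc (hlow i) (hhigh i) hk m hc
  have hscale : ∀ i j, |lam i - lam j| = |lam i * (k * m) - lam j * (k * m)| / (k * m) :=
    fun i j => by rw [← sub_mul, abs_mul, abs_of_pos hK, mul_div_cancel_right₀ _ hK.ne']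
  rw [card_univ, Fintype.card_fin] at hcard
  refine ⟨dvdIndices k x, quotientBlock k x, fun _ => quotientBlock_eq_empty hrange,
    fun _ _ => disjoint_quotientBlock, disjoint_dvdIndices_quotientBlock,
    dvdIndices_union_biUnion_quotientBlock hrange, hcard, ?_, ?_⟩
  · intro a i hi j hj
    rw [mem_quotientBlock] at hi hj
    have h := abs_sub_lt_of_floor_add_ediv_eq hkZ hi.1 hj.1 (hi.2.trans hj.2.symm)
    push_cast at h
    calc |lam i - lam j| = |lam i * (k * m) - lam j * (k * m)| / (k * m) := hscale i j
      _ < k / (k * m) := by gcongr; linarith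
      _ = 1 / m := by field_simp
  · intro a b hab i hi j hj
    rw [mem_quotientBlock] at hi hj
    have h := one_lt_abs_sub_of_floor_add_ediv_ne hkZ hi.1 hj.1 (hi.2.trans_ne (hj.2 ▸ hab))
    rw [hscale]
    gcongr

/-- **Lemma 1.** Given `-1 ≤ λ_1 ≤ … ≤ λ_n ≤ 1` and positive integers `k, m`, there is a
partition of `{1,…,n}` into a set `J` with `#J ≤ n/k` and sets `L_a`, `a = -m,…,m`, such that
eigenvalue gaps inside each `L_a` are `< 1/m` and gaps between distinct `L_a, L_b` are
`≥ 1/(km)`. -/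
theorem lemma1_partition (n k m : ℕ) (hn : 0 < n) (hk : 0 < k) (hm : 0 < m)
    (lam : Fin n → ℝ) (hmono : Monotone lam)
    (hlow : ∀ i, -1 ≤ lam i) (hhigh : ∀ i, lam i ≤ 1) :
    ∃ (J : Finset (Fin n)) (L : ℤ → Finset (Fin n)),
      -- the sets `L_a` are indexed by `a ∈ {-m, …, m}`
      (∀ a : ℤ, a ∉ Finset.Icc (-(m : ℤ)) (m : ℤ) → L a = ∅) ∧
      -- the sets `L_a` are pairwise disjoint
      (∀ a b : ℤ, a ≠ b → Disjoint (L a) (L b)) ∧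
      -- each `L_a` is disjoint from `J`
      (∀ a : ℤ, Disjoint J (L a)) ∧
      -- together they cover `{1,…,n}`
      (J ∪ (Finset.Icc (-(m : ℤ)) (m : ℤ)).biUnion L = Finset.univ) ∧
      -- Property 1: `#J ≤ n/k`
      ((J.card : ℝ) ≤ (n : ℝ) / (k : ℝ)) ∧
      -- Property 2: small gaps inside each block
      (∀ a : ℤ, ∀ i ∈ L a, ∀ j ∈ L a, |lam i - lam j| < 1 / (m : ℝ)) ∧
      -- Property 3: separation between distinct blocks
      (∀ a b : ℤ, a ≠ b → ∀ i ∈ L a, ∀ j ∈ L b,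
        1 / ((k : ℝ) * (m : ℝ)) ≤ |lam i - lam j|) :=
  lemma1_partition_general n k m hk hm lam hlow hhigh
end

section
/- Let H_1, H_2 be n×n complex Hermitian matrices with operator norms ‖H_1‖ ≤ 1 and ‖H_2‖ ≤ 1, and suppose δ := ‖[H_1,H_2]‖_tr ≤ 1/16, where [H_1,H_2] = H_1H_2 - H_2H_1. Then there exist n×n complex Hermitian matrices A_1, A_2 with ‖A_1‖ ≤ 1, ‖A_2‖ ≤ 1, such that [A_1,A_2] = 0, [H_1,A_1] = 0, and ‖H_j - A_j‖_tr ≤ 2δ^{1/4} for j = 1, 2. -/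
/-!
Diagonalise `H₁ = U diag(λ) U*` and put `h = U* H₂ U`, so that `[H₁, H₂]` has entries
`(λᵢ - λⱼ) hᵢⱼ` in the eigenbasis. Cut the line into cells of length `ε = √δ` along a grid
shifted by `k / m`, `m = ⌈1 / ε⌉`. `A₁` moves every eigenvalue to a representative of its cell,
and `A₂` is the pinching of `h` that keeps only the entries `hᵢⱼ` with `λᵢ, λⱼ` in one cell.
Then `A₁` commutes with `H₁` and `A₂`, pinching does not increase the operator norm, and
`‖H₁ - A₁‖_tr ≤ ε`. A pair `(i, j)` is separated by at most `m |λᵢ - λⱼ| / ε + 1` of the `m`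
shifts, so averaging over the shifts and Cauchy–Schwarz, `∑ |λᵢ - λⱼ| |hᵢⱼ|² ≤ n δ`, give a
shift whose discarded mass `(1 / n) ∑ |hᵢⱼ|²` is at most `δ / ε + 1 / m ≤ 2 √δ`.
-/

noncomputable def hsNorm {n : ℕ} (A : Matrix (Fin n) (Fin n) ℂ) : ℝ :=
  Real.sqrt ((1 / (n : ℝ)) * ∑ i, ∑ j, ‖A i j‖ ^ 2)

noncomputable def opNorm {n : ℕ} (A : Matrix (Fin n) (Fin n) ℂ) : ℝ :=
  ‖(Matrix.toEuclideanCLM (𝕜 := ℂ) A : EuclideanSpace ℂ (Fin n) →L[ℂ] EuclideanSpace ℂ (Fin n))‖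

open Finset Unitary
open scoped Matrix.Norms.L2Operator

section ShiftedFloor

variable {m : ℕ}

noncomputable def shiftedFloorSum (m : ℕ) (y : ℝ) : ℤ := ∑ k ∈ range m, ⌊y + k / m⌋

-- The shift moves each summand to the next one, and the last one becomes `⌊y + 1⌋ = ⌊y⌋ + 1`.
lemma shiftedFloorSum_add_one_div (hm : 0 < m) (y : ℝ) :
    shiftedFloorSum m (y + 1 / m) = shiftedFloorSum m y + 1 := by
  have hshift : ∀ k : ℕ, y + 1 / m + k / m = y + ((k + 1 : ℕ) : ℝ) / m := fun k => by
    push_cast; ring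
  have hlast : ⌊y + (m : ℝ) / m⌋ = ⌊y⌋ + 1 := by
    rw [div_self (by positivity), ← Int.floor_add_one]
  have h₁ := sum_range_succ (fun k : ℕ => ⌊y + (k : ℝ) / m⌋) m
  have h₂ := sum_range_succ' (fun k : ℕ => ⌊y + (k : ℝ) / m⌋) m
  rw [shiftedFloorSum, shiftedFloorSum]
  simp only [hshift]
  simp only [CharP.cast_eq_zero, zero_div, add_zero, hlast] at h₁ h₂
  linarith

lemma shiftedFloorSum_add_nat_div (hm : 0 < m) (y : ℝ) (j : ℕ) :
    shiftedFloorSum m (y + j / m) = shiftedFloorSum m y + j := by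
  induction j with
  | zero => simp
  | succ j ih =>
    rw [show y + ((j + 1 : ℕ) : ℝ) / m = y + j / m + 1 / m by push_cast; ring,
      shiftedFloorSum_add_one_div hm, ih]
    push_cast; ring

lemma shiftedFloorSum_mono : Monotone (shiftedFloorSum m) := fun _ _ hxy =>
  sum_le_sum fun _ _ => Int.floor_le_floor (by linarith)

lemma card_floor_ne_le_shiftedFloorSum_sub {x y : ℝ} (hxy : x ≤ y) :
    (#{k ∈ range m | ⌊x + (k : ℕ) / (m : ℝ)⌋ ≠ ⌊y + k / m⌋} : ℤ) ≤
      shiftedFloorSum m y - shiftedFloorSum m x := by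
  rw [card_filter, shiftedFloorSum, shiftedFloorSum, ← sum_sub_distrib]
  push_cast
  refine sum_le_sum fun k _ => ?_
  have hle : ⌊x + k / m⌋ ≤ ⌊y + k / m⌋ := Int.floor_le_floor (by linarith)
  split_ifs with hne <;> omega

lemma card_floor_add_div_ne_le (hm : 0 < m) (x y : ℝ) :
    (#{k ∈ range m | ⌊x + (k : ℕ) / (m : ℝ)⌋ ≠ ⌊y + k / m⌋} : ℝ) ≤ m * |x - y| + 1 := by
  wlog hxy : x ≤ y generalizing x y
  · simpa only [ne_comm, abs_sub_comm] using this y x (le_of_not_ge hxy)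
  set j := ⌈m * (y - x)⌉₊
  have hj : y ≤ x + j / m := by
    rw [← sub_le_iff_le_add', le_div_iff₀ (by positivity), mul_comm]
    exact Nat.le_ceil _
  have hcount : (#{k ∈ range m | ⌊x + (k : ℕ) / (m : ℝ)⌋ ≠ ⌊y + k / m⌋} : ℤ) ≤ j := by
    have := shiftedFloorSum_mono (m := m) hj
    rw [shiftedFloorSum_add_nat_div hm] at this
    linarith [card_floor_ne_le_shiftedFloorSum_sub (m := m) hxy]
  calc (#{k ∈ range m | ⌊x + (k : ℕ) / (m : ℝ)⌋ ≠ ⌊y + k / m⌋} : ℝ)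
      ≤ j := by exact_mod_cast hcount
    _ ≤ m * |x - y| + 1 := by
      rw [abs_sub_comm, abs_of_nonneg (by linarith)]
      exact (Nat.ceil_lt_add_one (by have := sub_nonneg.2 hxy; positivity)).le

end ShiftedFloor

lemma exists_floor_bucketing {ι : Type*} [Fintype ι] (lam : ι → ℝ) (w : ι → ι → ℝ)
    (hw : ∀ i j, 0 ≤ w i j) {ε : ℝ} (hε : 0 < ε) {m : ℕ} (hm : 0 < m) :
    ∃ B : ι → ℤ, (∀ i j, B i = B j → |lam i - lam j| < ε) ∧
      ∑ i, ∑ j, (if B i = B j then 0 else w i j) ≤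
        (∑ i, ∑ j, |lam i - lam j| * w i j) / ε + (∑ i, ∑ j, w i j) / m := by
  set bucket : ℕ → ι → ℤ := fun k i => ⌊lam i / ε + (k : ℕ) / (m : ℝ)⌋
  set offMass : ℕ → ℝ := fun k => ∑ i, ∑ j, if bucket k i = bucket k j then 0 else w i j
  have hwidth : ∀ k i j, bucket k i = bucket k j → |lam i - lam j| < ε := fun k i j hij => by
    have := Int.abs_sub_lt_one_of_floor_eq_floor hij
    rwa [add_sub_add_right_eq_sub, ← sub_div, abs_div, abs_of_pos hε, div_lt_one hε] at this
  have hpair : ∀ i j, ∑ k ∈ range m, (if bucket k i = bucket k j then 0 else w i j) ≤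
      m * (|lam i - lam j| * w i j / ε + w i j / m) := fun i j => by
    have hcount := card_floor_add_div_ne_le hm (lam i / ε) (lam j / ε)
    rw [← sub_div, abs_div, abs_of_pos hε] at hcount
    calc ∑ k ∈ range m, (if bucket k i = bucket k j then 0 else w i j)
        = #{k ∈ range m | bucket k i ≠ bucket k j} * w i j := by
          rw [← nsmul_eq_mul, ← sum_const, sum_filter]
          exact sum_congr rfl fun k _ => by split_ifs <;> simp_all
      _ ≤ (m * (|lam i - lam j| / ε) + 1) * w i j := by gcongr; exact hw i j
      _ = m * (|lam i - lam j| * w i j / ε + w i j / m) := by field_simp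
  have hsum : ∑ k ∈ range m, offMass k ≤ ∑ _k ∈ range m,
      ((∑ i, ∑ j, |lam i - lam j| * w i j) / ε + (∑ i, ∑ j, w i j) / m) := by
    rw [sum_const, card_range, nsmul_eq_mul, sum_div, sum_div, ← sum_add_distrib, mul_sum]
    simp only [offMass, sum_div, ← sum_add_distrib, mul_sum]
    rw [sum_comm]
    refine sum_le_sum fun i _ => ?_
    rw [sum_comm]
    exact sum_le_sum fun j _ => hpair i j
  obtain ⟨k, -, hk⟩ := exists_le_of_sum_le (nonempty_range_iff.2 hm.ne') hsum
  exact ⟨bucket k, hwidth k, hk⟩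

lemma exists_fiber_representative {α β : Type*} (B : α → β) :
    ∃ rep : α → α, (∀ i, B (rep i) = B i) ∧ ∀ i j, B i = B j → rep i = rep j :=
  ⟨fun i => (Quotient.mk (Setoid.ker B) i).out, fun i => Quotient.mk_out (s := Setoid.ker B) i,
    fun _ _ h => congrArg Quotient.out (Quotient.sound h)⟩

lemma CStarRing.norm_conjStarAlgAut {S R : Type*} [NormedRing R] [StarRing R] [CStarRing R]
    [SMul S R] [IsScalarTower S R R] [SMulCommClass S R R] (u : unitary R) (x : R) :
    ‖conjStarAlgAut S R u x‖ = ‖x‖ := by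
  rw [conjStarAlgAut_apply, ← coe_star, norm_mul_coe_unitary, norm_coe_unitary_mul]

namespace Matrix

variable {𝕜 : Type*} [RCLike 𝕜] {ι β : Type*} [DecidableEq β]

def pinching (B : ι → β) (A : Matrix ι ι 𝕜) : Matrix ι ι 𝕜 :=
  of fun i j => if B i = B j then A i j else 0

lemma IsHermitian.pinching {A : Matrix ι ι 𝕜} (hA : A.IsHermitian) (B : ι → β) :
    (pinching B A).IsHermitian := by
  ext i j
  by_cases h : B i = B j
  · simp [Matrix.pinching, h, hA.apply]
  · simp [Matrix.pinching, h, Ne.symm h]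

variable [Fintype ι]

noncomputable def frobeniusSq (A : Matrix ι ι 𝕜) : ℝ := ∑ i, ∑ j, ‖A i j‖ ^ 2

lemma frobeniusSq_nonneg (A : Matrix ι ι 𝕜) : 0 ≤ frobeniusSq A := by
  unfold frobeniusSq; positivity

lemma frobeniusSq_eq_zero_iff {A : Matrix ι ι 𝕜} : frobeniusSq A = 0 ↔ A = 0 := by
  simp only [frobeniusSq, sum_eq_zero_iff_of_nonneg fun _ _ => sum_nonneg fun _ _ => sq_nonneg _,
    sum_eq_zero_iff_of_nonneg fun _ _ => sq_nonneg _, mem_univ, true_implies,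
    pow_eq_zero_iff two_ne_zero, norm_eq_zero, ← Matrix.ext_iff, zero_apply]

lemma frobeniusSq_eq_re_trace (A : Matrix ι ι 𝕜) :
    frobeniusSq A = RCLike.re (trace (Aᴴ * A)) := by
  simp only [frobeniusSq, trace, diag, mul_apply, conjTranspose_apply, RCLike.star_def,
    RCLike.conj_mul, map_sum, ← RCLike.ofReal_pow, RCLike.ofReal_re]
  exact sum_comm

lemma frobeniusSq_sub_pinching (B : ι → β) (A : Matrix ι ι 𝕜) :
    frobeniusSq (A - pinching B A) = ∑ i, ∑ j, if B i = B j then 0 else ‖A i j‖ ^ 2 := by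
  simp only [frobeniusSq, sub_apply, Matrix.pinching, of_apply]
  congr! 3
  split_ifs <;> simp

lemma sum_abs_sub_mul_norm_sq_le [DecidableEq ι] (lam : ι → ℝ) (A : Matrix ι ι 𝕜) :
    ∑ i, ∑ j, |lam i - lam j| * ‖A i j‖ ^ 2 ≤
      √(frobeniusSq (diagonal (RCLike.ofReal ∘ lam) * A - A * diagonal (RCLike.ofReal ∘ lam))) *
        √(frobeniusSq A) := by
  have hentry : ∀ i j, ‖(diagonal (RCLike.ofReal ∘ lam) * A - A * diagonal (RCLike.ofReal ∘ lam) :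
      Matrix ι ι 𝕜) i j‖ = |lam i - lam j| * ‖A i j‖ := fun i j => by
    rw [sub_apply, diagonal_mul, mul_diagonal, Function.comp_apply, Function.comp_apply,
      mul_comm (A i j), ← sub_mul, ← RCLike.ofReal_sub, norm_mul, RCLike.norm_ofReal]
  simp only [frobeniusSq, hentry, ← Fintype.sum_prod_type']
  convert Real.sum_mul_le_sqrt_mul_sqrt univ (fun p : ι × ι => |lam p.1 - lam p.2| * ‖A p.1 p.2‖)
    (fun p => ‖A p.1 p.2‖) using 2 with p
  ring

variable [DecidableEq ι]

lemma frobeniusSq_conjStarAlgAut (u : unitary (Matrix ι ι 𝕜)) (A : Matrix ι ι 𝕜) :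
    frobeniusSq (conjStarAlgAut 𝕜 _ u A) = frobeniusSq A := by
  rw [frobeniusSq_eq_re_trace, frobeniusSq_eq_re_trace, ← star_eq_conjTranspose, ← map_star,
    ← map_mul, conjStarAlgAut_apply, trace_mul_comm, ← mul_assoc, coe_star_mul_self, one_mul,
    star_eq_conjTranspose]

lemma frobeniusSq_diagonal (d : ι → 𝕜) : frobeniusSq (diagonal d) = ∑ i, ‖d i‖ ^ 2 := by
  simp [frobeniusSq, diagonal_apply, apply_ite]

lemma sum_norm_sq_mulVec_le (A : Matrix ι ι 𝕜) (v : ι → 𝕜) :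
    ∑ i, ‖(A *ᵥ v) i‖ ^ 2 ≤ ‖A‖ ^ 2 * ∑ i, ‖v i‖ ^ 2 := by
  have h := l2_opNorm_mulVec A (WithLp.toLp 2 v)
  rwa [← sq_le_sq₀ (norm_nonneg _) (by positivity), mul_pow, EuclideanSpace.norm_sq_eq,
    EuclideanSpace.norm_sq_eq] at h

lemma l2_opNorm_le_of_sum_norm_sq_mulVec_le {A : Matrix ι ι 𝕜} {c : ℝ} (hc : 0 ≤ c)
    (h : ∀ v : ι → 𝕜, ∑ i, ‖(A *ᵥ v) i‖ ^ 2 ≤ c ^ 2 * ∑ i, ‖v i‖ ^ 2) : ‖A‖ ≤ c := by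
  refine ContinuousLinearMap.opNorm_le_bound _ hc fun x => ?_
  rw [← sq_le_sq₀ (norm_nonneg _) (by positivity), mul_pow, EuclideanSpace.norm_sq_eq,
    EuclideanSpace.norm_sq_eq]
  exact h x

lemma frobeniusSq_le_card_mul_sq_norm (A : Matrix ι ι 𝕜) :
    frobeniusSq A ≤ Fintype.card ι * ‖A‖ ^ 2 := by
  have hcol : ∀ j, ∑ i, ‖A i j‖ ^ 2 ≤ ‖A‖ ^ 2 := fun j => by
    simpa [mulVec_single_one, Pi.single_apply, apply_ite] using
      sum_norm_sq_mulVec_le A (Pi.single j 1)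
  calc frobeniusSq A = ∑ j, ∑ i, ‖A i j‖ ^ 2 := sum_comm
    _ ≤ ∑ _j : ι, ‖A‖ ^ 2 := sum_le_sum fun j _ => hcol j
    _ = Fintype.card ι * ‖A‖ ^ 2 := by simp

lemma commute_diagonal_pinching {d : ι → 𝕜} {B : ι → β} (hd : ∀ i j, B i = B j → d i = d j)
    (A : Matrix ι ι 𝕜) : Commute (diagonal d) (pinching B A) := by
  ext i j
  simp only [diagonal_mul, mul_diagonal, Matrix.pinching, of_apply]
  split_ifs with h
  · rw [hd i j h, mul_comm]
  · simp

/-- On the block `B⁻¹ c`, `pinching B A *ᵥ v` agrees with `A` applied to the part of `v`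
supported on that block, and these parts of `v` are orthogonal. -/
lemma l2_opNorm_pinching_le (B : ι → β) (A : Matrix ι ι 𝕜) : ‖pinching B A‖ ≤ ‖A‖ := by
  refine l2_opNorm_le_of_sum_norm_sq_mulVec_le (norm_nonneg A) fun v => ?_
  set block : β → ι → 𝕜 := fun c j => if B j = c then v j else 0
  have hblock : ∀ i, (pinching B A *ᵥ v) i = (A *ᵥ block (B i)) i := fun i => by
    simp only [mulVec, dotProduct, Matrix.pinching, of_apply, block]
    exact sum_congr rfl fun j _ => by split_ifs <;> simp_all
  have hmaps : ∀ i ∈ (univ : Finset ι), B i ∈ univ.image B := fun i _ =>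
    mem_image_of_mem B (mem_univ i)
  calc ∑ i, ‖(pinching B A *ᵥ v) i‖ ^ 2
      = ∑ c ∈ univ.image B, ∑ i with B i = c, ‖(A *ᵥ block c) i‖ ^ 2 := by
        rw [← sum_fiberwise_of_maps_to hmaps]
        refine sum_congr rfl fun c _ => sum_congr rfl fun i hi => ?_
        rw [hblock, (mem_filter.1 hi).2]
    _ ≤ ∑ c ∈ univ.image B, ‖A‖ ^ 2 * ∑ j, ‖block c j‖ ^ 2 := by
        refine sum_le_sum fun c _ => le_trans ?_ (sum_norm_sq_mulVec_le A (block c))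
        exact sum_le_sum_of_subset_of_nonneg (filter_subset _ _) fun _ _ _ => sq_nonneg _
    _ = ‖A‖ ^ 2 * ∑ j, ‖v j‖ ^ 2 := by
        rw [← mul_sum, ← sum_fiberwise_of_maps_to hmaps (f := fun j => ‖v j‖ ^ 2)]
        congr 1
        refine sum_congr rfl fun c _ => ?_
        rw [sum_filter]
        exact sum_congr rfl fun j _ => by split_ifs <;> simp [block, *]

variable (H₁ H₂ A₁ A₂ : Matrix ι ι 𝕜) (r₁ r₂ : ℝ)

structure IsCommutingApprox : Prop where
  isHermitian_left : A₁.IsHermitian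
  isHermitian_right : A₂.IsHermitian
  norm_left_le : ‖A₁‖ ≤ 1
  norm_right_le : ‖A₂‖ ≤ 1
  commute : Commute A₁ A₂
  commute_left : Commute H₁ A₁
  frobeniusSq_sub_left_le : frobeniusSq (H₁ - A₁) ≤ r₁
  frobeniusSq_sub_right_le : frobeniusSq (H₂ - A₂) ≤ r₂

variable {H₁ H₂ A₁ A₂ r₁ r₂}

lemma IsCommutingApprox.conjStarAlgAut (h : IsCommutingApprox H₁ H₂ A₁ A₂ r₁ r₂)
    (u : unitary (Matrix ι ι 𝕜)) :
    IsCommutingApprox (conjStarAlgAut 𝕜 _ u H₁) (conjStarAlgAut 𝕜 _ u H₂)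
      (conjStarAlgAut 𝕜 _ u A₁) (conjStarAlgAut 𝕜 _ u A₂) r₁ r₂ where
  isHermitian_left := IsSelfAdjoint.map h.isHermitian_left _
  isHermitian_right := IsSelfAdjoint.map h.isHermitian_right _
  norm_left_le := (CStarRing.norm_conjStarAlgAut u A₁).trans_le h.norm_left_le
  norm_right_le := (CStarRing.norm_conjStarAlgAut u A₂).trans_le h.norm_right_le
  commute := h.commute.map _
  commute_left := h.commute_left.map _
  frobeniusSq_sub_left_le := by
    rw [← map_sub, frobeniusSq_conjStarAlgAut]; exact h.frobeniusSq_sub_left_le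
  frobeniusSq_sub_right_le := by
    rw [← map_sub, frobeniusSq_conjStarAlgAut]; exact h.frobeniusSq_sub_right_le

theorem exists_isCommutingApprox_diagonal {lam : ι → ℝ} (hlam : ∀ i, |lam i| ≤ 1)
    {H : Matrix ι ι 𝕜} (hH : H.IsHermitian) (hH1 : ‖H‖ ≤ 1) {ε : ℝ} (hε : 0 < ε) :
    ∃ A₁ A₂, IsCommutingApprox (diagonal (RCLike.ofReal ∘ lam)) H A₁ A₂
      (Fintype.card ι * ε ^ 2)
      (√(Fintype.card ι * frobeniusSq (diagonal (RCLike.ofReal ∘ lam) * H -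
        H * diagonal (RCLike.ofReal ∘ lam))) / ε + Fintype.card ι * ε) := by
  set D : Matrix ι ι 𝕜 := diagonal (RCLike.ofReal ∘ lam)
  set N : ℝ := (Fintype.card ι : ℝ)
  set m := ⌈1 / ε⌉₊
  obtain ⟨B, hwidth, hoff⟩ := exists_floor_bucketing lam (fun i j => ‖H i j‖ ^ 2)
    (fun _ _ => sq_nonneg _) hε (Nat.ceil_pos.2 (by positivity) : 0 < m)
  obtain ⟨rep, hrep, hrep_eq⟩ := exists_fiber_representative B
  set μ : ι → ℝ := lam ∘ rep
  have hfrobH : frobeniusSq H ≤ N := by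
    simpa using (frobeniusSq_le_card_mul_sq_norm H).trans
      (mul_le_mul_of_nonneg_left (pow_le_one₀ (norm_nonneg H) hH1) (Nat.cast_nonneg _))
  have hrounding : frobeniusSq (D - diagonal (RCLike.ofReal ∘ μ)) ≤ N * ε ^ 2 :=
    calc frobeniusSq (D - diagonal (RCLike.ofReal ∘ μ)) = ∑ i, |lam i - μ i| ^ 2 := by
          rw [diagonal_sub, frobeniusSq_diagonal]
          simp only [Function.comp_apply, ← RCLike.ofReal_sub, RCLike.norm_ofReal]
      _ ≤ ∑ _i : ι, ε ^ 2 := sum_le_sum fun i _ =>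
          pow_le_pow_left₀ (abs_nonneg _) (hwidth i (rep i) (hrep i).symm).le 2
      _ = N * ε ^ 2 := by simp [N]
  have hcommutator : ∑ i, ∑ j, |lam i - lam j| * ‖H i j‖ ^ 2 ≤ √(N * frobeniusSq (D * H - H * D)) :=
    calc ∑ i, ∑ j, |lam i - lam j| * ‖H i j‖ ^ 2
        ≤ √(frobeniusSq (D * H - H * D)) * √(frobeniusSq H) := sum_abs_sub_mul_norm_sq_le lam H
      _ ≤ √(frobeniusSq (D * H - H * D)) * √N := by gcongr
      _ = √(N * frobeniusSq (D * H - H * D)) := by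
        rw [← Real.sqrt_mul (frobeniusSq_nonneg _), mul_comm]
  have hmesh : frobeniusSq H / m ≤ N * ε := by
    rw [div_le_iff₀ (by positivity)]
    calc frobeniusSq H ≤ N * (m * ε) :=
          hfrobH.trans (le_mul_of_one_le_right (Nat.cast_nonneg _)
            ((div_le_iff₀ hε).1 (Nat.le_ceil _)))
      _ = N * ε * m := by ring
  refine ⟨diagonal (RCLike.ofReal ∘ μ), pinching B H,
    isHermitian_diagonal_iff.2 fun i => RCLike.conj_ofReal _, hH.pinching B, ?_,
    (l2_opNorm_pinching_le B H).trans hH1,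
    commute_diagonal_pinching (fun i j hij => by simp [μ, hrep_eq i j hij]) H,
    commute_diagonal _ _, hrounding, ?_⟩
  · rw [l2_opNorm_diagonal]
    exact (pi_norm_le_iff_of_nonneg zero_le_one).2 fun i => by simpa [μ] using hlam (rep i)
  · rw [frobeniusSq_sub_pinching]
    exact hoff.trans (add_le_add (div_le_div_of_nonneg_right hcommutator hε.le) hmesh)

theorem exists_isCommutingApprox {H₁ H₂ : Matrix ι ι 𝕜} (hH₁ : H₁.IsHermitian)
    (hH₂ : H₂.IsHermitian) (hH₁1 : ‖H₁‖ ≤ 1) (hH₂1 : ‖H₂‖ ≤ 1) {ε : ℝ} (hε : 0 < ε) :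
    ∃ A₁ A₂, IsCommutingApprox H₁ H₂ A₁ A₂ (Fintype.card ι * ε ^ 2)
      (√(Fintype.card ι * frobeniusSq (H₁ * H₂ - H₂ * H₁)) / ε + Fintype.card ι * ε) := by
  set u := hH₁.eigenvectorUnitary
  set H := conjStarAlgAut 𝕜 _ (star u) H₂
  have hH : conjStarAlgAut 𝕜 _ u H = H₂ := by
    rw [← conjStarAlgAut_mul_apply, Unitary.mul_star_self, map_one]; rfl
  have hlam : ∀ i, |hH₁.eigenvalues i| ≤ 1 := fun i => by
    have hD := congrArg norm hH₁.conjStarAlgAut_star_eigenvectorUnitary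
    rw [CStarRing.norm_conjStarAlgAut, l2_opNorm_diagonal] at hD
    simpa using (norm_le_pi_norm (RCLike.ofReal ∘ hH₁.eigenvalues : ι → 𝕜) i).trans (hD ▸ hH₁1)
  obtain ⟨A₁, A₂, hA⟩ := exists_isCommutingApprox_diagonal hlam
    (IsSelfAdjoint.map hH₂ (conjStarAlgAut 𝕜 _ (star u)))
    ((CStarRing.norm_conjStarAlgAut _ H₂).trans_le hH₂1) hε
  have hD : conjStarAlgAut 𝕜 _ u (diagonal (RCLike.ofReal ∘ hH₁.eigenvalues)) = H₁ :=
    hH₁.spectral_theorem.symm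
  have hC : frobeniusSq (diagonal (RCLike.ofReal ∘ hH₁.eigenvalues) * H -
      H * diagonal (RCLike.ofReal ∘ hH₁.eigenvalues)) = frobeniusSq (H₁ * H₂ - H₂ * H₁) := by
    conv_lhs => rw [← frobeniusSq_conjStarAlgAut u]
    rw [map_sub, map_mul, map_mul, hD, hH]
  have hA' := hA.conjStarAlgAut u
  rw [hD, hH, hC] at hA'
  exact ⟨_, _, hA'⟩

end Matrix

lemma frobeniusSq_eq_card_mul_hsNorm_sq {n : ℕ} (A : Matrix (Fin n) (Fin n) ℂ) :
    Matrix.frobeniusSq A = n * hsNorm A ^ 2 := by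
  rcases n.eq_zero_or_pos with rfl | hn
  · simp [Matrix.frobeniusSq]
  · rw [hsNorm, Real.sq_sqrt (by positivity)]
    field_simp
    rfl

lemma hsNorm_le_of_frobeniusSq_le {n : ℕ} {A : Matrix (Fin n) (Fin n) ℂ} {c : ℝ} (hc : 0 ≤ c)
    (h : Matrix.frobeniusSq A ≤ n * c ^ 2) : hsNorm A ≤ c := by
  refine Real.sqrt_le_iff.2 ⟨hc, ?_⟩
  calc 1 / (n : ℝ) * Matrix.frobeniusSq A ≤ 1 / n * (n * c ^ 2) := by gcongr
    _ ≤ c ^ 2 := by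
      rcases n.eq_zero_or_pos with rfl | hn
      · simpa using sq_nonneg c
      · field_simp; rfl

theorem almost_commuting_hs_general (n : ℕ) (H₁ H₂ : Matrix (Fin n) (Fin n) ℂ)
    (hH₁ : H₁.IsHermitian) (hH₂ : H₂.IsHermitian)
    (hop₁ : opNorm H₁ ≤ 1) (hop₂ : opNorm H₂ ≤ 1)
    (δ : ℝ) (hδ : δ = hsNorm (H₁ * H₂ - H₂ * H₁)) (hδ16 : δ ≤ 1 / 16) :
    ∃ A₁ A₂ : Matrix (Fin n) (Fin n) ℂ,
      A₁.IsHermitian ∧ A₂.IsHermitian ∧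
      opNorm A₁ ≤ 1 ∧ opNorm A₂ ≤ 1 ∧
      A₁ * A₂ - A₂ * A₁ = 0 ∧
      H₁ * A₁ - A₁ * H₁ = 0 ∧
      hsNorm (H₁ - A₁) ≤ 2 * δ ^ ((1 : ℝ) / 4) ∧
      hsNorm (H₂ - A₂) ≤ 2 * δ ^ ((1 : ℝ) / 4) := by
  have hfrob : Matrix.frobeniusSq (H₁ * H₂ - H₂ * H₁) = n * δ ^ 2 := by
    rw [hδ, frobeniusSq_eq_card_mul_hsNorm_sq]
  have hδ0 : 0 ≤ δ := hδ ▸ Real.sqrt_nonneg _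
  obtain hδzero | hδpos := hδ0.eq_or_lt
  · have hcomm : H₁ * H₂ - H₂ * H₁ = 0 :=
      Matrix.frobeniusSq_eq_zero_iff.1 (by simp [hfrob, ← hδzero])
    refine ⟨H₁, H₂, hH₁, hH₂, hop₁, hop₂, hcomm, sub_self _, ?_, ?_⟩ <;>
      exact hsNorm_le_of_frobeniusSq_le (by positivity) (by simp [Matrix.frobeniusSq]; positivity)
  set q := δ ^ ((1 : ℝ) / 4)
  have hq : 0 < q := by positivity
  have hδq : δ = q ^ 4 := by
    rw [← Real.rpow_natCast, ← Real.rpow_mul hδ0]; norm_num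
  obtain ⟨A₁, A₂, hA⟩ := Matrix.exists_isCommutingApprox hH₁ hH₂ hop₁ hop₂ (pow_pos hq 2)
  simp only [Fintype.card_fin, hfrob] at hA
  refine ⟨A₁, A₂, hA.isHermitian_left, hA.isHermitian_right, hA.norm_left_le, hA.norm_right_le,
    sub_eq_zero.2 hA.commute, sub_eq_zero.2 hA.commute_left,
    hsNorm_le_of_frobeniusSq_le (by positivity) (hA.frobeniusSq_sub_left_le.trans ?_),
    hsNorm_le_of_frobeniusSq_le (by positivity) (hA.frobeniusSq_sub_right_le.trans ?_)⟩
  · have hq2 : q ^ 2 ≤ 4 := by nlinarith [hδq ▸ hδ16]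
    gcongr
    nlinarith
  · rw [show (n : ℝ) * (n * δ ^ 2) = (n * δ) ^ 2 by ring, Real.sqrt_sq (by positivity), hδq,
      show (n : ℝ) * q ^ 4 / q ^ 2 = n * q ^ 2 by field_simp]
    nlinarith [mul_nonneg (Nat.cast_nonneg n) (sq_nonneg q)]

/-- **Theorem (main).** If `H₁, H₂` are Hermitian contractions with
`δ = ‖[H₁,H₂]‖_tr ≤ 1/16`, then there are commuting Hermitian contractions `A₁, A₂`
with `[H₁,A₁] = 0` and `‖H_j - A_j‖_tr ≤ 2 δ^{1/4}`, `j = 1,2`. -/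
theorem almost_commuting_hs (n : ℕ) (hn : 0 < n) (H₁ H₂ : Matrix (Fin n) (Fin n) ℂ)
    (hH₁ : H₁.IsHermitian) (hH₂ : H₂.IsHermitian)
    (hop₁ : opNorm H₁ ≤ 1) (hop₂ : opNorm H₂ ≤ 1)
    (δ : ℝ) (hδ : δ = hsNorm (H₁ * H₂ - H₂ * H₁)) (hδ16 : δ ≤ 1 / 16) :
    ∃ A₁ A₂ : Matrix (Fin n) (Fin n) ℂ,
      A₁.IsHermitian ∧ A₂.IsHermitian ∧
      opNorm A₁ ≤ 1 ∧ opNorm A₂ ≤ 1 ∧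
      A₁ * A₂ - A₂ * A₁ = 0 ∧
      H₁ * A₁ - A₁ * H₁ = 0 ∧
      hsNorm (H₁ - A₁) ≤ 2 * δ ^ ((1 : ℝ) / 4) ∧
      hsNorm (H₂ - A₂) ≤ 2 * δ ^ ((1 : ℝ) / 4) :=
  almost_commuting_hs_general n H₁ H₂ hH₁ hH₂ hop₁ hop₂ δ hδ hδ16
end
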